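/- arXiv:2604.04697 — 5 statements merged into one kernel-verified Lean document; each statement's English description precedes it below -/
import Mathlib

section
/- Let (A, α, ℤ₊^d) be a C*-dynamical system. For F ⊆ [d] set 𝒥_F := (⋂_{j∈F} ker α_j)^⊥ (so 𝒥_∅ = A^⊥ = {0}). Then for every F ⊊ [d] and every i ∈ [d] \ F one has α_i^{-1}(𝒥_F) ∩ 𝒥_{F∪{i}} ⊆ 𝒥_F. Elementwise: if a ∈ A satisfies α_i(a)·b = 0 for every b ∈ ⋂_{j∈F} ker α_j, and a·c = 0 for every c ∈ ⋂_{j∈F∪{i}} ker α_j, then a·b = 0 for every b ∈ ⋂_{j∈F} ker α_j. (This is the specialisation to C*-dynamical systems, via ker φ_n = ker α_n and X_{α,i}^{-1}(I) = α_i^{-1}(I), of the paper's Proposition 4.1 on the ideals 𝒥_F of a strong compactly aligned product system.) -/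
/-! If `a` kills `𝒥 := ⋂_{j∈F} ker α_j ∩ ker α_i` and `α_i a` kills `α_i(⋂_{j∈F} ker α_j)`, then
for `b ∈ ⋂_{j∈F} ker α_j` the element `c := a⋆ a b` lies in `𝒥`, because
`α_i c = α_i(a)⋆ α_i(a) α_i(b) = 0`. Hence `a c = 0`, and the C*-identity
`‖x‖² = ‖x⋆ x‖` twice turns `a a⋆ a b = 0` into `a⋆ a b = 0` and then into `a b = 0`. -/

namespace CStarRing

variable {E : Type*} [NonUnitalNormedRing E] [StarRing E] [CStarRing E]

theorem mul_eq_zero_of_star_mul_self_mul_eq_zero {a b : E} (h : star a * a * b = 0) :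
    a * b = 0 := by
  rw [← star_mul_self_eq_zero_iff]
  calc star (a * b) * (a * b) = star b * (star a * a * b) := by simp only [star_mul, mul_assoc]
    _ = 0 := by rw [h, mul_zero]

theorem mul_eq_zero_of_mul_star_mul_self_mul_eq_zero {a b : E} (h : a * (star a * a * b) = 0) :
    a * b = 0 := by
  refine mul_eq_zero_of_star_mul_self_mul_eq_zero ?_
  rw [← star_mul_self_eq_zero_iff]
  calc star (star a * a * b) * (star a * a * b) = star b * star a * (a * (star a * a * b)) := by
        simp only [star_mul, star_star, mul_assoc]
    _ = 0 := by rw [h, mul_zero]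

theorem mul_eq_zero_of_annihilates_inter_ker {B F : Type*} [SemigroupWithZero B] [FunLike F E B]
    [MulHomClass F E B] (φ : F) {I : Set E} (hI : ∀ x ∈ I, ∀ y, y * x ∈ I) {a b : E}
    (ha : ∀ c ∈ I, φ c = 0 → a * c = 0) (hab : φ a * φ b = 0) (hb : b ∈ I) : a * b = 0 := by
  refine mul_eq_zero_of_mul_star_mul_self_mul_eq_zero (ha _ (hI b hb _) ?_)
  rw [map_mul, map_mul, mul_assoc, hab, mul_zero]

end CStarRing

theorem stmt_0_general {A : Type*} [NonUnitalNormedRing A] [StarRing A] [CStarRing A]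
    [NormedSpace ℂ A]
    {d : ℕ} (α : Fin d → (A →⋆ₙₐ[ℂ] A))
    (hcomm : ∀ i j : Fin d, ∀ a : A, α i (α j a) = α j (α i a))
    (F : Finset (Fin d)) (i : Fin d) (a : A)
    (h1 : ∀ b : A, (∀ j ∈ F, α j b = 0) → α i a * b = 0)
    (h2 : ∀ c : A, (∀ j ∈ insert i F, α j c = 0) → a * c = 0) :
    ∀ b : A, (∀ j ∈ F, α j b = 0) → a * b = 0 := by
  intro b hb
  refine CStarRing.mul_eq_zero_of_annihilates_inter_ker (α i) (I := {x | ∀ j ∈ F, α j x = 0})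
    (fun x hx y j hj => by rw [map_mul, hx j hj, mul_zero])
    (fun c hc hic => h2 c ((Finset.forall_mem_insert _ _ _).mpr ⟨hic, hc⟩)) ?_ hb
  exact h1 _ fun j hj => by rw [hcomm, hb j hj, map_zero]

/-- Let `(A, α, ℤ₊^d)` be a C*-dynamical system (given by `d` pairwise
commuting *-endomorphisms of a C*-algebra `A`).  For `F ⊆ [d]` let
`𝒥_F := (⋂_{j ∈ F} ker α_j)^⊥`.  Then for every `F ⊊ [d]` and `i ∈ [d] \ F` one has
`α_i⁻¹(𝒥_F) ∩ 𝒥_{F ∪ {i}} ⊆ 𝒥_F`, stated elementwise. -/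
theorem stmt_0 {A : Type*} [NonUnitalNormedRing A] [StarRing A] [CStarRing A]
    [NormedSpace ℂ A] [IsScalarTower ℂ A A] [SMulCommClass ℂ A A]
    [CompleteSpace A] [StarModule ℂ A]
    {d : ℕ} (hd : 1 ≤ d) (α : Fin d → (A →⋆ₙₐ[ℂ] A))
    (hcomm : ∀ i j : Fin d, ∀ a : A, α i (α j a) = α j (α i a))
    (F : Finset (Fin d)) (hF : F ⊂ Finset.univ) (i : Fin d) (hi : i ∉ F) (a : A)
    (h1 : ∀ b : A, (∀ j ∈ F, α j b = 0) → α i a * b = 0)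
    (h2 : ∀ c : A, (∀ j ∈ insert i F, α j c = 0) → a * c = 0) :
    ∀ b : A, (∀ j ∈ F, α j b = 0) → a * b = 0 :=
  stmt_0_general α hcomm F i a h1 h2
end

section
/- Let (A, α, ℤ₊^d) be a C*-dynamical system and let L = (L_F)_{F ⊆ [d]} be a T-family for (A, α, ℤ₊^d). Then for every nonempty F ⊆ [d], every a ∈ L_F and every b ∈ A such that α_i(b) ∈ L_∅ for all i ∈ F, one has a·b ∈ L_∅. In other words, L_F · (⋂_{i∈F} α_i^{-1}(L_∅)) ⊆ L_∅, i.e. L_F ⊆ J_F(L_∅) := {a ∈ A : a·(⋂_{i∈F} α_i^{-1}(L_∅)) ⊆ L_∅}. (This is the specialisation to C*-dynamical systems of the paper's Proposition 4.7: a T-family satisfies L_F ⊆ J_F(L_∅, X).) -/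
/-!
Along a T-family the ideals grow with `F`, and an element `x ∈ L (insert i F)` with
`α i x ∈ L F` already lies in `L F`. Peeling off the indices of `F` one at a time therefore
brings `a * b ∈ L F` down to `L ∅`, since at each stage `α i (a * b) = α i a * α i b` lies in
`L ∅`, which is contained in every `L G`.
-/

def IsTwoSidedIdealSet {A : Type*} [NonUnitalNonAssocRing A] (I : Set A) : Prop :=
  (0 : A) ∈ I ∧ (∀ x ∈ I, ∀ y ∈ I, x + y ∈ I) ∧ (∀ x ∈ I, -x ∈ I) ∧
    (∀ a : A, ∀ x ∈ I, a * x ∈ I) ∧ (∀ a : A, ∀ x ∈ I, x * a ∈ I)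

def IsTFamily {ι A : Type*} [DecidableEq ι] (α : ι → A → A) (L : Finset ι → Set A) : Prop :=
  ∀ (F : Finset ι) (i : ι), i ∉ F → L F = α i ⁻¹' L F ∩ L (insert i F)

namespace IsTFamily

variable {ι A : Type*} [DecidableEq ι] {α : ι → A → A} {L : Finset ι → Set A}

theorem subset_insert (hL : IsTFamily α L) (F : Finset ι) (i : ι) :
    L F ⊆ L (insert i F) := by
  by_cases hi : i ∈ F
  · rw [Finset.insert_eq_of_mem hi]
  · rw [hL F i hi]
    exact Set.inter_subset_right

theorem monotone (hL : IsTFamily α L) : Monotone L := by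
  intro F G hFG
  suffices ∀ s : Finset ι, L F ⊆ L (s ∪ F) by
    simpa [Finset.sdiff_union_of_subset hFG] using this (G \ F)
  intro s
  induction s using Finset.induction_on with
  | empty => simp
  | insert j s _ ih =>
    rw [Finset.insert_union]
    exact ih.trans (hL.subset_insert _ j)

theorem mem_of_mem_insert (hL : IsTFamily α L) {F : Finset ι} {i : ι} {x : A}
    (hx : x ∈ L (insert i F)) (hαx : α i x ∈ L F) : x ∈ L F := by
  by_cases hi : i ∈ F
  · rwa [Finset.insert_eq_of_mem hi] at hx
  · rw [hL F i hi]
    exact ⟨hαx, hx⟩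

theorem mem_of_mem_union (hL : IsTFamily α L) {s G : Finset ι} {x : A}
    (hx : x ∈ L (s ∪ G)) (hαx : ∀ i ∈ s, α i x ∈ L G) : x ∈ L G := by
  induction s using Finset.induction_on with
  | empty => simpa using hx
  | insert j s _ ih =>
    refine ih ?_ fun i hi ↦ hαx i (Finset.mem_insert_of_mem hi)
    refine hL.mem_of_mem_insert (by rwa [← Finset.insert_union]) ?_
    exact hL.monotone Finset.subset_union_right (hαx j (Finset.mem_insert_self j s))

end IsTFamily

theorem stmt_3_general {A : Type*} [NonUnitalNormedRing A] [StarRing A]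
    [NormedSpace ℂ A]
    {d : ℕ} (α : Fin d → (A →⋆ₙₐ[ℂ] A))
    (L : Finset (Fin d) → Set A)
    (hIdeal : ∀ F, IsClosed (L F) ∧ IsTwoSidedIdealSet (L F))
    (hT : ∀ F : Finset (Fin d), F ⊂ Finset.univ → ∀ i ∉ F,
      L F = (⇑(α i)) ⁻¹' (L F) ∩ L (insert i F)) :
    ∀ F : Finset (Fin d), F.Nonempty → ∀ a ∈ L F,
      ∀ b : A, (∀ i ∈ F, α i b ∈ L ∅) → a * b ∈ L ∅ := by
  have hL : IsTFamily (fun i ↦ ⇑(α i)) L := fun F i hi ↦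
    hT F (Finset.ssubset_univ_iff.mpr fun h ↦ hi (h ▸ Finset.mem_univ i)) i hi
  intro F _ a ha b hb
  obtain ⟨-, -, -, hleft, -⟩ := (hIdeal ∅).2
  refine hL.mem_of_mem_union (s := F) ?_ fun i hi ↦ ?_
  · rw [Finset.union_empty]
    exact (hIdeal F).2.2.2.2.2 b a ha
  · rw [map_mul]
    exact hleft (α i a) _ (hb i hi)

/-- For a T-family `L` of a C*-dynamical system `(A, α, ℤ₊^d)` and every
nonempty `F ⊆ [d]`: if `a ∈ L_F` and `b ∈ ⋂_{i ∈ F} α_i⁻¹(L_∅)`, then `a·b ∈ L_∅`;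
i.e. `L_F ⊆ J_F(L_∅) = {a : a·(⋂_{i∈F} α_i⁻¹(L_∅)) ⊆ L_∅}`. -/
theorem stmt_3 {A : Type*} [NonUnitalNormedRing A] [StarRing A] [CStarRing A]
    [NormedSpace ℂ A] [IsScalarTower ℂ A A] [SMulCommClass ℂ A A]
    [CompleteSpace A] [StarModule ℂ A]
    {d : ℕ} (hd : 1 ≤ d) (α : Fin d → (A →⋆ₙₐ[ℂ] A))
    (hcomm : ∀ i j : Fin d, ∀ a : A, α i (α j a) = α j (α i a))
    (L : Finset (Fin d) → Set A)
    (hIdeal : ∀ F, IsClosed (L F) ∧ IsTwoSidedIdealSet (L F))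
    (hT : ∀ F : Finset (Fin d), F ⊂ Finset.univ → ∀ i ∉ F,
      L F = (⇑(α i)) ⁻¹' (L F) ∩ L (insert i F)) :
    ∀ F : Finset (Fin d), F.Nonempty → ∀ a ∈ L F,
      ∀ b : A, (∀ i ∈ F, α i b ∈ L ∅) → a * b ∈ L ∅ :=
  stmt_3_general α L hIdeal hT
end

section
/- Let (A, α, ℤ₊^d) be a C*-dynamical system and let L = (L_F)_{F ⊆ [d]} be a T-family for (A, α, ℤ₊^d). Fix a nonempty proper subset F ⊊ [d] and n ∈ ℤ₊^d with n ⊥ F. If a ∈ A satisfies α_m(a) ∈ ⋂_{F ⊊ D ⊆ [d]} L_D for every m ∈ ℤ₊^d with m ⊥ F (i.e. a ∈ L_{inv,F}), and α_n(a) ∈ L_F, then a ∈ L_F. (This is the specialisation to C*-dynamical systems of the paper's Proposition 4.9: the restriction of the induced left action [φ_n]_{L_F} to [L_{inv,F}]_{L_F} is injective, since for X_α the kernel condition [φ_n]_{L_F}([a]) = 0 reads α_n(a) ∈ L_F.) -/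
/-- `α_n := α₁^[n₁] ∘ ⋯ ∘ α_d^[n_d]` for `n ∈ ℤ₊^d`. -/
def alphaComp {A : Type*} {d : ℕ} (α : Fin d → (A → A)) (n : Fin d → ℕ) : A → A :=
  (List.finRange d).foldr (fun i f => (α i)^[n i] ∘ f) id

section Aux

variable {A : Type*} {d : ℕ} (α : Fin d → (A → A))

private def gFold (l : List (Fin d)) (n : Fin d → ℕ) : A → A :=
  l.foldr (fun i f => (α i)^[n i] ∘ f) id

private lemma gFold_congr {l : List (Fin d)} {n m : Fin d → ℕ}
    (h : ∀ i ∈ l, n i = m i) : gFold α l n = gFold α l m := by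
  induction l with
  | nil => rfl
  | cons i t ih =>
    simp only [gFold, List.foldr_cons]
    rw [h i (List.mem_cons_self),
      show t.foldr (fun i f => (α i)^[n i] ∘ f) id
          = t.foldr (fun i f => (α i)^[m i] ∘ f) id from
        ih fun j hj => h j (List.mem_cons_of_mem _ hj)]

private lemma gFold_zero {l : List (Fin d)} {n : Fin d → ℕ}
    (h : ∀ i ∈ l, n i = 0) : gFold α l n = id := by
  induction l with
  | nil => rfl
  | cons i t ih =>
    simp only [gFold, List.foldr_cons] at *
    rw [h i (List.mem_cons_self),
      ih fun j hj => h j (List.mem_cons_of_mem _ hj)]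
    rfl

private lemma gFold_comm (hcomm : ∀ i j : Fin d, ∀ a : A, α i (α j a) = α j (α i a))
    {l : List (Fin d)} {n : Fin d → ℕ} (j : Fin d) (a : A) :
    gFold α l n (α j a) = α j (gFold α l n a) := by
  induction l with
  | nil => rfl
  | cons i t ih =>
    have hc : Function.Commute (α i) (α j) := fun x => hcomm i j x
    simp only [gFold, List.foldr_cons, Function.comp_apply] at *
    rw [ih, (hc.iterate_left (n i)) _]

private lemma gFold_succ (hcomm : ∀ i j : Fin d, ∀ a : A, α i (α j a) = α j (α i a))
    {l : List (Fin d)} (hl : l.Nodup) {n : Fin d → ℕ}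
    {j : Fin d} (hj : j ∈ l) {k : ℕ} (hk : n j = k + 1) (a : A) :
    gFold α l n a = gFold α l (Function.update n j k) (α j a) := by
  induction l with
  | nil => simp at hj
  | cons i t ih =>
    rcases List.mem_cons.mp hj with rfl | hjt
    ·
      have hit : j ∉ t := (List.nodup_cons.mp hl).1
      have ht : gFold α t n = gFold α t (Function.update n j k) :=
        gFold_congr α fun x hx =>
          (Function.update_of_ne (by rintro rfl; exact hit hx) _ _).symm
      simp only [gFold, List.foldr_cons, Function.comp_apply] at *
      rw [hk, Function.update_self, ht, Function.iterate_succ_apply']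
      have hgc := gFold_comm α hcomm (l := t) (n := Function.update n j k) j a
      simp only [gFold] at hgc
      rw [hgc]
      exact (Function.iterate_succ_apply' (α j) k _).symm.trans
        (Function.iterate_succ_apply (α j) k _)
    · have hij : i ≠ j := fun h => (List.nodup_cons.mp hl).1 (h ▸ hjt)
      simp only [gFold, List.foldr_cons, Function.comp_apply] at *
      rw [ih (List.nodup_cons.mp hl).2 hjt,
        Function.update_of_ne hij]

private lemma alphaComp_eq_gFold (n : Fin d → ℕ) :
    alphaComp α n = gFold α (List.finRange d) n := rfl

lemma alphaComp_zero' {n : Fin d → ℕ} (h : ∀ i, n i = 0) (a : A) :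
    alphaComp α n a = a := by
  rw [alphaComp_eq_gFold, gFold_zero α fun i _ => h i]; rfl

lemma alphaComp_succ' (hcomm : ∀ i j : Fin d, ∀ a : A, α i (α j a) = α j (α i a))
    {n : Fin d → ℕ} {j : Fin d} {k : ℕ} (hk : n j = k + 1) (a : A) :
    alphaComp α n a = alphaComp α (Function.update n j k) (α j a) := by
  rw [alphaComp_eq_gFold, alphaComp_eq_gFold,
    gFold_succ α hcomm (List.nodup_finRange d) (List.mem_finRange j) hk a]

end Aux

/-- Let `L` be a T-family for a C*-dynamical system `(A, α, ℤ₊^d)`, let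
`∅ ≠ F ⊊ [d]` and `n ⊥ F`.  If `a ∈ L_{inv,F}` (i.e. `α_m(a) ∈ ⋂_{F ⊊ D ⊆ [d]} L_D` for
every `m ⊥ F`) and `α_n(a) ∈ L_F`, then `a ∈ L_F`. -/
theorem stmt_5 {A : Type*} [NonUnitalNormedRing A] [StarRing A] [CStarRing A]
    [NormedSpace ℂ A] [IsScalarTower ℂ A A] [SMulCommClass ℂ A A]
    [CompleteSpace A] [StarModule ℂ A]
    {d : ℕ} (hd : 1 ≤ d) (α : Fin d → (A →⋆ₙₐ[ℂ] A))
    (hcomm : ∀ i j : Fin d, ∀ a : A, α i (α j a) = α j (α i a))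
    (L : Finset (Fin d) → Set A)
    (hIdeal : ∀ F, IsClosed (L F) ∧ IsTwoSidedIdealSet (L F))
    (hT : ∀ F : Finset (Fin d), F ⊂ Finset.univ → ∀ i ∉ F,
      L F = (⇑(α i)) ⁻¹' (L F) ∩ L (insert i F))
    (F : Finset (Fin d)) (hFne : F.Nonempty) (hFpr : F ⊂ Finset.univ)
    (n : Fin d → ℕ) (hn : ∀ i ∈ F, n i = 0) (a : A)
    (ha : ∀ m : Fin d → ℕ, (∀ i ∈ F, m i = 0) →
      ∀ D : Finset (Fin d), F ⊂ D → alphaComp (fun i => ⇑(α i)) m a ∈ L D)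
    (han : alphaComp (fun i => ⇑(α i)) n a ∈ L F) :
    a ∈ L F := by
  classical
  set β : Fin d → A → A := fun i => ⇑(α i) with hβ
  have hc : ∀ i j : Fin d, ∀ x : A, β i (β j x) = β j (β i x) := hcomm
  suffices H : ∀ N : ℕ, ∀ n : Fin d → ℕ, (∀ i ∈ F, n i = 0) → (∑ i, n i) = N →
      ∀ a : A, (∀ m : Fin d → ℕ, (∀ i ∈ F, m i = 0) → ∀ D, F ⊂ D →
        alphaComp β m a ∈ L D) → alphaComp β n a ∈ L F → a ∈ L F by
    exact H (∑ i, n i) n hn rfl a ha han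
  intro N
  induction N using Nat.strong_induction_on with
  | _ N IH =>
    intro n hn0 hsum a ha han
    by_cases hN : ∀ i, n i = 0
    · rwa [alphaComp_zero' β hN a] at han
    · push_neg at hN
      obtain ⟨i, hi⟩ := hN
      have hiF : i ∉ F := fun h => hi (hn0 i h)
      obtain ⟨k, hk⟩ : ∃ k, n i = k + 1 := Nat.exists_eq_succ_of_ne_zero hi
      set n' := Function.update n i k with hn'
      have hstep : alphaComp β n a = alphaComp β n' (β i a) :=
        alphaComp_succ' β hc hk a
      have hsum' : ∑ j, n' j < N := by
        have h1 : ∑ j, n' j = n' i + ∑ j ∈ Finset.univ.erase i, n' j :=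
          (Finset.add_sum_erase _ n' (Finset.mem_univ i)).symm
        have h2 : ∑ j, n j = n i + ∑ j ∈ Finset.univ.erase i, n j :=
          (Finset.add_sum_erase _ n (Finset.mem_univ i)).symm
        have h3 : ∑ j ∈ Finset.univ.erase i, n' j = ∑ j ∈ Finset.univ.erase i, n j :=
          Finset.sum_congr rfl fun j hj =>
            Function.update_of_ne (Finset.ne_of_mem_erase hj) _ _
        have h4 : n' i = k := Function.update_self _ _ _
        omega
      rw [hT F hFpr i hiF]
      constructor
      · show β i a ∈ L F
        refine IH (∑ j, n' j) hsum' n' ?_ rfl (β i a) ?_ ?_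
        · intro j hj
          rw [hn', Function.update_of_ne (by rintro rfl; exact hiF hj) _ _]
          exact hn0 j hj
        · intro m hm D hD
          have heq : alphaComp β m (β i a)
              = alphaComp β (Function.update m i (m i + 1)) a := by
            rw [alphaComp_succ' β hc
              (show Function.update m i (m i + 1) i = m i + 1 from
                Function.update_self _ _ _) a,
              Function.update_idem, Function.update_eq_self]
          rw [heq]
          exact ha _ (fun j hj =>
            by rw [Function.update_of_ne (by rintro rfl; exact hiF hj) _ _]; exact hm j hj) D hD
        · rwa [← hstep]
      · show a ∈ L (insert i F)
        have h0 := ha (fun _ => 0) (fun _ _ => rfl) (insert i F) (Finset.ssubset_insert hiF)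
        rwa [alphaComp_zero' β (fun _ => rfl) a] at h0
end

section
/- Let (A, α, ℤ₊^d) be a C*-dynamical system and let I ⊆ A be a closed two-sided ideal with α_j(I) ⊆ I for all j ∈ [d]. Then for every nonempty F ⊆ [d], (⋂_{i∈F} α_i^{-1}(I)) ∩ {a ∈ A : a·(⋂_{i∈F} α_i^{-1}(I)) ⊆ I} = I. (This is the specialisation to C*-dynamical systems of the identity X_F^{-1}(I) ∩ J_F(I, X) = I, item (iii) of the paper's Proposition 3.8, using that closed two-sided ideals of a C*-algebra are self-adjoint and hereditary.) -/
noncomputable def approxUnitFun (s y : ℝ) : ℝ := y ^ 2 / (y ^ 2 + s ^ 2)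

section approxUnitFun

variable {s : ℝ}

lemma approxUnitFun_eq_mul (s y : ℝ) : approxUnitFun s y = y * (y / (y ^ 2 + s ^ 2)) := by
  rw [approxUnitFun, mul_div_assoc', sq]

@[simp] lemma approxUnitFun_zero (s : ℝ) : approxUnitFun s 0 = 0 := by simp [approxUnitFun]

lemma continuous_div_sq_add_sq (hs : s ≠ 0) : Continuous fun y : ℝ => y / (y ^ 2 + s ^ 2) :=
  continuous_id.div (by fun_prop) fun y => by positivity

lemma continuous_approxUnitFun (hs : s ≠ 0) : Continuous (approxUnitFun s) := by
  simp_rw [funext (approxUnitFun_eq_mul s)]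
  exact continuous_id.mul (continuous_div_sq_add_sq hs)

lemma abs_mul_one_sub_approxUnitFun_sq_le (hs : 0 < s) (y : ℝ) :
    |y * (1 - approxUnitFun s y) ^ 2| ≤ s / 2 := by
  have hpos : 0 < y ^ 2 + s ^ 2 := by positivity
  have hone : 1 - approxUnitFun s y = s ^ 2 / (y ^ 2 + s ^ 2) := by
    rw [approxUnitFun]; field_simp; ring
  rw [hone, abs_mul, abs_of_nonneg (a := (_ / _) ^ 2) (by positivity), div_pow, mul_div_assoc',
    div_le_iff₀ (by positivity)]
  have amgm : 2 * |y| * s ≤ y ^ 2 + s ^ 2 := by nlinarith [sq_nonneg (|y| - s), sq_abs y]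
  calc |y| * (s ^ 2) ^ 2 = 2 * |y| * s * (s ^ 3 / 2) := by ring
    _ ≤ (y ^ 2 + s ^ 2) * (s * s ^ 2 / 2) := by rw [← pow_succ']; gcongr
    _ ≤ (y ^ 2 + s ^ 2) * (s * (y ^ 2 + s ^ 2) / 2) := by
      gcongr; exact le_add_of_nonneg_left (sq_nonneg y)
    _ = s / 2 * (y ^ 2 + s ^ 2) ^ 2 := by ring

end approxUnitFun

section CStarAlgebra

variable {A : Type*} [NonUnitalCStarAlgebra A]

lemma norm_sub_cfcₙ_mul_self_mul_star_sq_le (a : A) {g : ℝ → ℝ}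
    (hg : ContinuousOn g (quasispectrum ℝ (a * star a))) (hg0 : g 0 = 0) {c : ℝ}
    (hc : ∀ y ∈ quasispectrum ℝ (a * star a), |y * (1 - g y) ^ 2| ≤ c) :
    ‖a - cfcₙ g (a * star a) * a‖ ^ 2 ≤ c := by
  set b := a * star a
  set u := cfcₙ g b
  have hb : IsSelfAdjoint b := .mul_star_self a
  have hu : star u = u := IsSelfAdjoint.cfcₙ.star_eq
  have hbu : cfcₙ (fun y => y * g y) b = b * u := by
    rw [cfcₙ_mul (fun y => y) g b, cfcₙ_id' ℝ b hb]
  have hub : cfcₙ (fun y => g y * y) b = u * b := by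
    rw [cfcₙ_mul g (fun y => y) b, cfcₙ_id' ℝ b hb]
  have hubu : cfcₙ (fun y => g y * (y * g y)) b = u * (b * u) := by
    rw [cfcₙ_mul g (fun y => y * g y) b, hbu]
  have hprod : (a - u * a) * star (a - u * a) = cfcₙ (fun y => y * (1 - g y) ^ 2) b := by
    have hexpand : (a - u * a) * star (a - u * a) = b - b * u - (u * b - u * (b * u)) := by
      simp only [star_sub, star_mul, hu, b]
      noncomm_ring
    have hfun : (fun y => y * (1 - g y) ^ 2) =
        fun y => y - y * g y - (g y * y - g y * (y * g y)) := by
      funext y; ring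
    rw [hexpand, hfun, cfcₙ_sub (fun y => y - y * g y) (fun y => g y * y - g y * (y * g y)) b,
      cfcₙ_sub (fun y => y) (fun y => y * g y) b,
      cfcₙ_sub (fun y => g y * y) (fun y => g y * (y * g y)) b, cfcₙ_id' ℝ b hb, hbu, hub, hubu]
  rw [sq, ← CStarRing.norm_self_mul_star, hprod]
  exact norm_cfcₙ_le hc

variable {I : Set A}

lemma cfcₙ_approxUnitFun_mem (hright : ∀ a : A, ∀ x ∈ I, x * a ∈ I) {b : A} (hbI : b ∈ I)
    (hb : IsSelfAdjoint b) {s : ℝ} (hs : s ≠ 0) : cfcₙ (approxUnitFun s) b ∈ I := by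
  rw [funext (approxUnitFun_eq_mul s),
    cfcₙ_mul (fun y => y) _ b (hg := (continuous_div_sq_add_sq hs).continuousOn), cfcₙ_id' ℝ b hb]
  exact hright _ b hbI

lemma mem_of_mul_star_mem (hI : IsClosed I) (hright : ∀ a : A, ∀ x ∈ I, x * a ∈ I) {a : A}
    (ha : a * star a ∈ I) : a ∈ I := by
  rw [← hI.closure_eq, Metric.mem_closure_iff]
  intro ε hε
  have hs : 0 < ε ^ 2 := by positivity
  refine ⟨cfcₙ (approxUnitFun (ε ^ 2)) (a * star a) * a,
    hright a _ (cfcₙ_approxUnitFun_mem hright ha (.mul_star_self a) hs.ne'), ?_⟩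
  have hsq := norm_sub_cfcₙ_mul_self_mul_star_sq_le a
    (continuous_approxUnitFun hs.ne').continuousOn (approxUnitFun_zero _)
    fun y _ => abs_mul_one_sub_approxUnitFun_sq_le hs y
  rw [dist_eq_norm]
  exact lt_of_pow_lt_pow_left₀ 2 hε.le (by linarith)

lemma star_mem_of_isClosed (hI : IsClosed I) (hleft : ∀ a : A, ∀ x ∈ I, a * x ∈ I)
    (hright : ∀ a : A, ∀ x ∈ I, x * a ∈ I) {x : A} (hx : x ∈ I) : star x ∈ I :=
  mem_of_mul_star_mem hI hright (by rw [star_star]; exact hleft _ x hx)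

end CStarAlgebra

theorem stmt_7_general {A : Type*} [NonUnitalNormedRing A] [StarRing A] [CStarRing A]
    [NormedSpace ℂ A] [IsScalarTower ℂ A A] [SMulCommClass ℂ A A]
    [CompleteSpace A] [StarModule ℂ A]
    {d : ℕ} (α : Fin d → (A →⋆ₙₐ[ℂ] A))
    (I : Set A) (hClosed : IsClosed I) (hIdeal : IsTwoSidedIdealSet I)
    (hInv : ∀ j : Fin d, ∀ x ∈ I, α j x ∈ I) :
    ∀ F : Finset (Fin d), F.Nonempty →
      {a : A | ∀ i ∈ F, α i a ∈ I} ∩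
        {a : A | ∀ b : A, (∀ i ∈ F, α i b ∈ I) → a * b ∈ I} = I := by
  let _ : NonUnitalCStarAlgebra A := { ‹NonUnitalNormedRing A›, ‹StarRing A›, ‹CStarRing A›,
    ‹NormedSpace ℂ A›, ‹IsScalarTower ℂ A A›, ‹SMulCommClass ℂ A A›, ‹CompleteSpace A›,
    ‹StarModule ℂ A› with }
  obtain ⟨-, -, -, hleft, hright⟩ := hIdeal
  intro F _
  ext a
  refine ⟨fun ⟨haF, haJ⟩ => ?_, fun ha => ⟨fun i _ => hInv i a ha, fun b _ => hright b a ha⟩⟩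
  refine mem_of_mul_star_mem hClosed hright (haJ (star a) fun i hi => ?_)
  rw [map_star]
  exact star_mem_of_isClosed hClosed hleft hright (haF i hi)

/-- Let `(A, α, ℤ₊^d)` be a C*-dynamical system and `I` a closed two-sided
ideal with `α_j(I) ⊆ I` for all `j ∈ [d]`.  Then for every nonempty `F ⊆ [d]`,
`(⋂_{i∈F} α_i⁻¹(I)) ∩ {a : a·(⋂_{i∈F} α_i⁻¹(I)) ⊆ I} = I`. -/
theorem stmt_7 {A : Type*} [NonUnitalNormedRing A] [StarRing A] [CStarRing A]
    [NormedSpace ℂ A] [IsScalarTower ℂ A A] [SMulCommClass ℂ A A]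
    [CompleteSpace A] [StarModule ℂ A]
    {d : ℕ} (hd : 1 ≤ d) (α : Fin d → (A →⋆ₙₐ[ℂ] A))
    (hcomm : ∀ i j : Fin d, ∀ a : A, α i (α j a) = α j (α i a))
    (I : Set A) (hClosed : IsClosed I) (hIdeal : IsTwoSidedIdealSet I)
    (hInv : ∀ j : Fin d, ∀ x ∈ I, α j x ∈ I) :
    ∀ F : Finset (Fin d), F.Nonempty →
      {a : A | ∀ i ∈ F, α i a ∈ I} ∩
        {a : A | ∀ b : A, (∀ i ∈ F, α i b ∈ I) → a * b ∈ I} = I :=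
  stmt_7_general α I hClosed hIdeal hInv
end

section
/- Let B be a nonzero C*-algebra and let A := B ⊕ ℂ be its unitisation. Define two commuting *-endomorphisms of A by α₁ := id_A and α₂(b, λ) := (0, λ), and extend to a C*-dynamical system (A, α, ℤ₊²) by α_{(m,n)} := α₁^m ∘ α₂^n. Set 𝒥_F := (⋂_{i∈F} ker α_i)^⊥ for ∅ ≠ F ⊆ {1,2}, 𝒥_∅ := {0}, and 𝓘_F := ⋂_{n ⊥ F} α_n^{-1}(𝒥_F). Then: 𝓘_∅ = {0}, 𝓘_{{1}} = A, 𝓘_{{1,2}} = A, and 𝓘_{{2}} = (ker α₂)^⊥, where ker α₂ = B ⊕ {0}. (This is the computation of the family 𝓘 carried out in the paper's Remark 4.2 for this C*-dynamical system.) -/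
variable {B : Type*} [NonUnitalNormedRing B] [StarRing B] [CStarRing B]
  [NormedSpace ℂ B] [IsScalarTower ℂ B B] [SMulCommClass ℂ B B]
  [CompleteSpace B] [StarModule ℂ B]

/-- The endomorphism `α₂` of the unitisation `A = B ⊕ ℂ`: `(b, λ) ↦ (0, λ)`. -/
def alpha2 : Unitization ℂ B → Unitization ℂ B := fun a => Unitization.inl a.fst

/-- `α_{(m,n)} := α₁^m ∘ α₂^n` with `α₁ = id`. -/
def alphaN (n : ℕ × ℕ) : Unitization ℂ B → Unitization ℂ B :=
  (id : Unitization ℂ B → Unitization ℂ B)^[n.1] ∘ (alpha2 (B := B))^[n.2]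

/-- The annihilator `S^⊥ = {a : a·s = 0 for all s ∈ S}`. -/
def perp (S : Set (Unitization ℂ B)) : Set (Unitization ℂ B) :=
  {a | ∀ s ∈ S, a * s = 0}

/-- The kernel of an endomorphism, as a set. -/
def kerSet (f : Unitization ℂ B → Unitization ℂ B) : Set (Unitization ℂ B) :=
  {a | f a = 0}

lemma alphaN_apply (n : ℕ × ℕ) (a : Unitization ℂ B) :
    alphaN (B := B) n a = (alpha2 (B := B))^[n.2] a := by
  simp [alphaN, Function.iterate_id]

lemma alpha2_zero : alpha2 (B := B) 0 = 0 := by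
  simp [alpha2]

/-- For the C*-dynamical system `(A, α, ℤ₊²)` on the unitisation
`A = B ⊕ ℂ` of a nonzero C*-algebra `B`, with `α₁ = id` and `α₂(b, λ) = (0, λ)`, the family
`𝓘_F = ⋂_{n ⊥ F} α_n⁻¹(𝒥_F)` (where `𝒥_∅ = {0}` and `𝒥_F = (⋂_{i∈F} ker α_i)^⊥`)
is: `𝓘_∅ = {0}`, `𝓘_{{1}} = A`, `𝓘_{{1,2}} = A`, `𝓘_{{2}} = (ker α₂)^⊥`,
where `ker α₂ = B ⊕ {0}`. -/
theorem stmt_9 [Nontrivial B] :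
    (⋂ n ∈ (Set.univ : Set (ℕ × ℕ)),
        alphaN (B := B) n ⁻¹' ({0} : Set (Unitization ℂ B))) = {0} ∧
    (⋂ n ∈ {n : ℕ × ℕ | n.1 = 0},
        alphaN (B := B) n ⁻¹' perp (kerSet (id : Unitization ℂ B → Unitization ℂ B)))
      = Set.univ ∧
    (⋂ n ∈ {n : ℕ × ℕ | n.1 = 0 ∧ n.2 = 0},
        alphaN (B := B) n ⁻¹'
          perp (kerSet (id : Unitization ℂ B → Unitization ℂ B) ∩ kerSet (alpha2 (B := B))))
      = Set.univ ∧
    kerSet (alpha2 (B := B)) = {a : Unitization ℂ B | a.fst = 0} ∧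
    (⋂ n ∈ {n : ℕ × ℕ | n.2 = 0}, alphaN (B := B) n ⁻¹' perp (kerSet (alpha2 (B := B))))
      = perp (kerSet (alpha2 (B := B))) := by
  refine ⟨?_, ?_, ?_, ?_, ?_⟩
  · ext a
    simp only [Set.mem_iInter, Set.mem_univ, Set.mem_preimage, Set.mem_singleton_iff,
      true_implies]
    constructor
    · intro h
      have := h (0, 0)
      simpa [alphaN_apply] using this
    · rintro rfl n
      rw [alphaN_apply]
      exact Function.iterate_fixed alpha2_zero n.2
  · ext a
    simp only [Set.mem_iInter, Set.mem_preimage, Set.mem_univ, iff_true, Set.mem_setOf_eq]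
    intro n _
    intro s hs
    have : s = 0 := hs
    simp [this]
  · ext a
    simp only [Set.mem_iInter, Set.mem_preimage, Set.mem_univ, iff_true, Set.mem_setOf_eq]
    intro n _
    intro s hs
    have : s = 0 := hs.1
    simp [this]
  · ext a
    simp only [kerSet, alpha2, Set.mem_setOf_eq]
    constructor
    · intro h
      have := congrArg (fun x : Unitization ℂ B => x.fst) h
      simpa using this
    · intro h
      simp [h]
  · apply subset_antisymm
    · intro a ha
      have := Set.mem_iInter₂.1 ha (0, 0) rfl
      simpa [alphaN_apply] using this
    · intro a ha
      refine Set.mem_iInter₂.2 fun n hn => ?_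
      have hn2 : n.2 = 0 := hn
      simp only [Set.mem_preimage, alphaN_apply, hn2, Function.iterate_zero, id]
      exact ha
end
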